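/- Let Y be a geodesic manifold and let C ⊆ Y be a closed, connected, locally convex subset. Then C is weakly convex: any two points of C are the end points of some geodesic in Y. -/

import Mathlib

universe u v w

/-- A convexity-space structure on an (open) subset `U` of a topological space `Y`,
given by a map `C` assigning to points `x, y ∈ U` a subset `C x y ⊆ U`:
`U` with its subspace topology is Hausdorff, `C` is continuous (as a map into the
power set of `U` with the topology generated by `{A | A ⊆ W}`, `W` relatively open),
(C1) each `C x y` is convex, (C2) each `C x y` is minimal among the connected subsets of
`U` containing `x` and `y`, and (C3) `U` has a basis of convex (relatively) open sets.
Since `U` is required to be open in `Y`, relatively open subsets of `U` are exactly the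
open subsets of `Y` contained in `U`. -/
structure IsConvexitySpaceOn {Y : Type*} [TopologicalSpace Y] (U : Set Y)
    (C : Y → Y → Set Y) : Prop where
  /-- The carrier is open in the ambient space. -/
  isOpen : IsOpen U
  /-- `U` is Hausdorff in its subspace topology. -/
  t2 : ∀ x ∈ U, ∀ y ∈ U, x ≠ y →
    ∃ V W : Set Y, IsOpen V ∧ IsOpen W ∧ x ∈ V ∧ y ∈ W ∧ V ∩ W ∩ U = ∅
  /-- `C x y` is a subset of `U` for `x, y ∈ U`. -/
  segment_subset : ∀ x ∈ U, ∀ y ∈ U, C x y ⊆ U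
  /-- `C x y` contains `x`. -/
  mem_left : ∀ x ∈ U, ∀ y ∈ U, x ∈ C x y
  /-- `C x y` contains `y`. -/
  mem_right : ∀ x ∈ U, ∀ y ∈ U, y ∈ C x y
  /-- `C x y` is connected. -/
  preconnected : ∀ x ∈ U, ∀ y ∈ U, IsPreconnected (C x y)
  /-- (C1): `C x y` is convex. -/
  convex : ∀ x ∈ U, ∀ y ∈ U, ∀ u ∈ C x y, ∀ v ∈ C x y, C u v ⊆ C x y
  /-- (C2): `C x y` is minimal among the connected subsets of `U` containing `x, y`. -/
  minimal : ∀ x ∈ U, ∀ y ∈ U, ∀ A : Set Y, A ⊆ C x y → x ∈ A → y ∈ A →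
    IsPreconnected A → A = C x y
  /-- Continuity of `(x, y) ↦ C x y`. -/
  continuity : ∀ x ∈ U, ∀ y ∈ U, ∀ W : Set Y, IsOpen W → C x y ⊆ W →
    ∃ V V' : Set Y, IsOpen V ∧ IsOpen V' ∧ x ∈ V ∧ y ∈ V' ∧
      ∀ x' ∈ V ∩ U, ∀ y' ∈ V' ∩ U, C x' y' ⊆ W
  /-- (C3): `U` has a basis of convex open sets. -/
  basis : ∀ x ∈ U, ∀ W : Set Y, IsOpen W → x ∈ W →
    ∃ V : Set Y, IsOpen V ∧ x ∈ V ∧ V ⊆ W ∩ U ∧ ∀ u ∈ V, ∀ v ∈ V, C u v ⊆ V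

/-- A *local convexity structure* on a topological space `Y`: an open cover `atlas` of `Y`
by convexity spaces (chart `U` carrying the convexity map `seg U`) such that every convex
open subspace of a chart is again a chart, with the restricted convexity map. -/
structure LocalConvexityStructure (Y : Type*) [TopologicalSpace Y] where
  /-- The charts. -/
  atlas : Set (Set Y)
  /-- The convexity map of each chart: `seg U x y` is the minimal connected subset of the
  chart `U` joining `x` and `y`. -/
  seg : Set Y → Y → Y → Set Y
  /-- The charts cover `Y`. -/
  covers : ∀ y : Y, ∃ U ∈ atlas, y ∈ U
  /-- Each chart is a convexity space. -/
  convexity : ∀ U ∈ atlas, IsConvexitySpaceOn U (seg U)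
  /-- Every convex open subspace of a chart is a chart, with the restricted map. -/
  subchart : ∀ U ∈ atlas, ∀ V : Set Y, V ⊆ U → IsOpen V →
    (∀ u ∈ V, ∀ v ∈ V, seg U u v ⊆ V) →
    V ∈ atlas ∧ ∀ u ∈ V, ∀ v ∈ V, seg V u v = seg U u v

/-- A subset `A ⊆ Y` is convex (w.r.t. a local convexity structure) if `A ∩ U` is convex
in `U` for every chart `U`. -/
def LocalConvexityStructure.IsConvexSet {Y : Type*} [TopologicalSpace Y]
    (𝒱 : LocalConvexityStructure Y) (A : Set Y) : Prop :=
  ∀ U ∈ 𝒱.atlas, ∀ u ∈ A ∩ U, ∀ v ∈ A ∩ U, 𝒱.seg U u v ⊆ A ∩ U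

/-- The convex hull of `A ⊆ Y`: the smallest convex set containing `A`. -/
def LocalConvexityStructure.hull {Y : Type*} [TopologicalSpace Y]
    (𝒱 : LocalConvexityStructure Y) (A : Set Y) : Set Y :=
  ⋂₀ {B : Set Y | A ⊆ B ∧ 𝒱.IsConvexSet B}

/-- `U` is a member of `𝒱_e` with target chart `V`: `U` is an open subset of `Z` mapped by
`e` homeomorphically (injectively and relatively openly; `e` is continuous in context)
onto a convex subspace of the chart `V` of `Y`. -/
def IsEtaleChartTo {Z Y : Type*} [TopologicalSpace Z] [TopologicalSpace Y]
    (𝒱 : LocalConvexityStructure Y) (e : Z → Y) (U : Set Z) (V : Set Y) : Prop :=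
  IsOpen U ∧ Set.InjOn e U ∧
  (∀ W : Set Z, W ⊆ U → IsOpen W → ∃ O : Set Y, IsOpen O ∧ e '' W = O ∩ e '' U) ∧
  V ∈ 𝒱.atlas ∧ e '' U ⊆ V ∧
  ∀ p ∈ e '' U, ∀ q ∈ e '' U, 𝒱.seg V p q ⊆ e '' U

/-- `U ∈ 𝒱_e`: `U` is an open subset of `Z` mapped by `e` homeomorphically onto a convex
subspace of some chart of `Y`. -/
def IsEtaleChart {Z Y : Type*} [TopologicalSpace Z] [TopologicalSpace Y]
    (𝒱 : LocalConvexityStructure Y) (e : Z → Y) (U : Set Z) : Prop :=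
  ∃ V : Set Y, IsEtaleChartTo 𝒱 e U V

/-- A continuous map `e : Z → Y` from a connected space `Z` is *étale* (w.r.t. a local
convexity structure on `Y`) if `e` is closed and the charts `𝒱_e` cover `Z`. -/
structure IsEtale {Z Y : Type*} [TopologicalSpace Z] [TopologicalSpace Y]
    (𝒱 : LocalConvexityStructure Y) (e : Z → Y) : Prop where
  continuous : Continuous e
  connectedSpace : ConnectedSpace Z
  isClosedMap : IsClosedMap e
  charts_cover : ∀ z : Z, ∃ U : Set Z, IsEtaleChart 𝒱 e U ∧ z ∈ U

/-- `e : Z → Y` is *generated* by `F ⊆ Z` if there is no proper closed connected subset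
`A ⊊ Z` containing `F` such that `e(U ∩ A)` is convex for all `U ∈ 𝒱_e`. -/
def Generates {Z Y : Type*} [TopologicalSpace Z] [TopologicalSpace Y]
    (𝒱 : LocalConvexityStructure Y) (e : Z → Y) (F : Set Z) : Prop :=
  ¬ ∃ A : Set Z, A ≠ Set.univ ∧ IsClosed A ∧ IsPreconnected A ∧ F ⊆ A ∧
      ∀ U : Set Z, IsEtaleChart 𝒱 e U → 𝒱.IsConvexSet (e '' (U ∩ A))

/-- A *geodesic manifold*: a Hausdorff space `Y` with a local convexity structure such that
(G1) the closure of the convex hull of every finite set is compact, and (G2) for every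
étale map `e : Z → Y` with `Z` compact that is generated by a two-element set
`{x, y} ⊆ Z`, every connected subset of `Z` containing `x` and `y` is all of `Z`. -/
structure IsGeodesicManifold {Y : Type v} [TopologicalSpace Y]
    (𝒱 : LocalConvexityStructure Y) : Prop where
  t2 : T2Space Y
  /-- (G1). -/
  hull_compact : ∀ F : Set Y, F.Finite → IsCompact (closure (𝒱.hull F))
  /-- (G2). -/
  geodesic_minimal : ∀ (Z : Type v) [TopologicalSpace Z] (e : Z → Y),
    CompactSpace Z → IsEtale 𝒱 e → ∀ x y : Z, Generates 𝒱 e {x, y} →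
    ∀ A : Set Z, IsPreconnected A → x ∈ A → y ∈ A → A = Set.univ

/-- Star-finiteness of the convexity space `(U, C)` (relative to the ambient space `Y`,
`U` being open in `Y`): every closed star in `U` has a finite end set.  A star with center
`x ∈ U` and end set `E ⊆ U \ {x}` is the union `S = ⋃ z ∈ E, C x z` where the segments
`C x z` pairwise intersect exactly in `{x}` and the subspace topology of `S` is the finest
topology making all inclusions `C x z ↪ S` continuous (i.e. every `Z ⊆ S` whose trace on
each `C x z` is closed in `C x z` is closed in `S`); the star is closed if `S` is closed
in `U`. -/
def StarFiniteOn {Y : Type*} [TopologicalSpace Y] (U : Set Y) (C : Y → Y → Set Y) : Prop :=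
  ∀ x ∈ U, ∀ E : Set Y, E ⊆ U \ {x} →
    (∀ z ∈ E, ∀ z' ∈ E, z ≠ z' → C x z ∩ C x z' = {x}) →
    (∀ Z : Set Y, Z ⊆ (⋃ z ∈ E, C x z) →
      (∀ z ∈ E, ∃ F : Set Y, IsClosed F ∧ Z ∩ C x z = F ∩ C x z) →
      ∃ F : Set Y, IsClosed F ∧ Z = F ∩ (⋃ z ∈ E, C x z)) →
    (∃ F : Set Y, IsClosed F ∧ (⋃ z ∈ E, C x z) = F ∩ U) →
    E.Finite

/-- A *geodesic q-manifold*: a geodesic manifold all of whose charts are star-finite and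
regular (as subspaces). -/
structure IsGeodesicQManifold {Y : Type v} [TopologicalSpace Y]
    (𝒱 : LocalConvexityStructure Y) extends IsGeodesicManifold 𝒱 : Prop where
  starFinite : ∀ U ∈ 𝒱.atlas, StarFiniteOn U (𝒱.seg U)
  regular : ∀ U ∈ 𝒱.atlas, RegularSpace U

/-- A *geodesic* in `Y` joining `p` and `q`: an étale map `e : Z → Y` with `Z` compact,
generated by a two-element set `{x, y} ⊆ Z`, whose end points are `e x = p` and
`e y = q`. -/
structure GeodesicConnecting {Y : Type v} [TopologicalSpace Y]
    (𝒱 : LocalConvexityStructure Y) (p q : Y) : Type (v + 1) where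
  Z : Type v
  [ts : TopologicalSpace Z]
  e : Z → Y
  x : Z
  y : Z
  compact : CompactSpace Z
  etale : IsEtale 𝒱 e
  generates : Generates 𝒱 e {x, y}
  endpoint_left : e x = p
  endpoint_right : e y = q

/-- A subset `A ⊆ Y` is *weakly convex* if any two of its points are the end points of a
geodesic in `Y`. -/
def LocalConvexityStructure.WeaklyConvex {Y : Type v} [TopologicalSpace Y]
    (𝒱 : LocalConvexityStructure Y) (A : Set Y) : Prop :=
  ∀ p ∈ A, ∀ q ∈ A, Nonempty (GeodesicConnecting 𝒱 p q)

/-!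
Local convexity of `C` lets one walk from `p` to `q` inside `C` along finitely many chart
segments, so `p` and `q` lie in one connected component `P` of `C ∩ hull F` for a finite set `F`.
By (G1) the closure `D` of `P` is compact, and it is again locally convex: near each of its points
`P` is convex in a chart, and convexity in a chart survives closure, because a segment leaving
`closure B` at `w` is cut by `w` into two sides (C2), which continuity of the segment map transfers
to nearby segments of `B`. Zorn's lemma then gives a minimal compact connected `A ⊆ D` through `p`
and `q` that is convex in every convex chart of `D`; the inclusion of `A` into `Y` is a geodesic.
-/

open Set

section

variable {X : Type*} [TopologicalSpace X]

theorem IsPreconnected.insert_diff_singleton_inter {S o₁ o₂ : Set X} {w : X}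
    (hS : IsPreconnected S) (hw : w ∈ S) (ho₁ : IsOpen o₁) (ho₂ : IsOpen o₂)
    (hcov : S \ {w} ⊆ o₁ ∪ o₂) (hdisj : S \ {w} ∩ (o₁ ∩ o₂) = ∅) :
    IsPreconnected (insert w (S \ {w} ∩ o₁)) := by
  set A := insert w (S \ {w} ∩ o₁)
  suffices key : ∀ q₁ q₂ : Set X, IsOpen q₁ → IsOpen q₂ → A ∩ (q₁ ∩ q₂) = ∅ → w ∈ q₁ →
      A ⊆ q₁ ∪ q₂ → A ⊆ q₁ by
    refine isPreconnected_iff_subset_of_disjoint.2 fun q₁ q₂ hq₁ hq₂ hAq hAq₁₂ => ?_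
    rcases hAq (mem_insert w _) with hw₁ | hw₂
    · exact Or.inl (key q₁ q₂ hq₁ hq₂ hAq₁₂ hw₁ hAq)
    · exact Or.inr (key q₂ q₁ hq₂ hq₁ (by rwa [inter_comm q₂]) hw₂ (by rwa [union_comm]))
  intro q₁ q₂ hq₁ hq₂ hAq₁₂ hw₁ hAq
  have hw₂ : w ∉ q₂ := fun h => hAq₁₂.subset ⟨mem_insert w _, hw₁, h⟩
  -- `q₁ ∪ o₂` and `q₂ ∩ o₁` split `S`, and `w` lies on the first side
  have hS₁ : S ⊆ q₁ ∪ o₂ := by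
    refine ((isPreconnected_iff_subset_of_disjoint.1 hS) _ _ (hq₁.union ho₂) (hq₂.inter ho₁)
      ?_ ?_).resolve_right fun h => hw₂ (h hw).1
    · intro s hs
      by_cases hsw : s = w
      · exact Or.inl (Or.inl (hsw ▸ hw₁))
      rcases hcov ⟨hs, hsw⟩ with h₁ | h₂
      · exact (hAq (mem_insert_of_mem w ⟨⟨hs, hsw⟩, h₁⟩)).imp Or.inl (⟨·, h₁⟩)
      · exact Or.inl (Or.inr h₂)
    · refine eq_empty_of_forall_notMem fun s ⟨hs, hs₁, hs₂, hso₁⟩ => ?_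
      have hsw : s ≠ w := fun h => hw₂ (h ▸ hs₂)
      rcases hs₁ with h₁ | h₂
      · exact hAq₁₂.subset ⟨mem_insert_of_mem w ⟨⟨hs, hsw⟩, hso₁⟩, h₁, hs₂⟩
      · exact hdisj.subset ⟨⟨hs, hsw⟩, hso₁, h₂⟩
  rintro s (rfl | ⟨hs, hso₁⟩)
  · exact hw₁
  · exact (hS₁ hs.1).resolve_right fun h₂ => hdisj.subset ⟨hs, hso₁, h₂⟩

theorem IsPreconnected.exists_separation_of_minimal {S : Set X} {u v w : X}
    (hS : IsPreconnected S) (hu : u ∈ S) (hv : v ∈ S) (hw : w ∈ S) (hwu : w ≠ u) (hwv : w ≠ v)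
    (hmin : ∀ A ⊆ S, u ∈ A → v ∈ A → IsPreconnected A → A = S) :
    ∃ o₁ o₂ : Set X, IsOpen o₁ ∧ IsOpen o₂ ∧ S \ {w} ⊆ o₁ ∪ o₂ ∧
      S \ {w} ∩ (o₁ ∩ o₂) = ∅ ∧ u ∈ o₁ ∧ v ∈ o₂ := by
  have huS : u ∈ S \ {w} := ⟨hu, hwu.symm⟩
  have hvS : v ∈ S \ {w} := ⟨hv, hwv.symm⟩
  have same_side : ∀ o₁ o₂ : Set X, IsOpen o₁ → IsOpen o₂ → S \ {w} ⊆ o₁ ∪ o₂ →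
      S \ {w} ∩ (o₁ ∩ o₂) = ∅ → u ∈ o₁ → v ∈ o₁ → S \ {w} ⊆ o₁ := by
    intro o₁ o₂ ho₁ ho₂ hcov hdisj hu₁ hv₁ s hs
    have hA := hmin _ (insert_subset hw (inter_subset_left.trans sdiff_subset))
      (mem_insert_of_mem w ⟨huS, hu₁⟩) (mem_insert_of_mem w ⟨hvS, hv₁⟩)
      (hS.insert_diff_singleton_inter hw ho₁ ho₂ hcov hdisj)
    rcases hA.symm ▸ hs.1 with rfl | ⟨-, hs₁⟩
    · exact absurd rfl hs.2
    · exact hs₁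
  have hnot : ¬ IsPreconnected (S \ {w}) := fun h =>
    ((hmin _ sdiff_subset huS hvS h).symm.subset hw).2 rfl
  simp only [isPreconnected_iff_subset_of_disjoint, not_forall, not_or] at hnot
  obtain ⟨o₁, o₂, ho₁, ho₂, hcov, hdisj, hn₁, hn₂⟩ := hnot
  rcases hcov huS with hu₁ | hu₂ <;> rcases hcov hvS with hv₁ | hv₂
  · exact absurd (same_side o₁ o₂ ho₁ ho₂ hcov hdisj hu₁ hv₁) hn₁
  · exact ⟨o₁, o₂, ho₁, ho₂, hcov, hdisj, hu₁, hv₂⟩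
  · exact ⟨o₂, o₁, ho₂, ho₁, union_comm o₁ o₂ ▸ hcov, inter_comm o₁ o₂ ▸ hdisj, hu₂, hv₁⟩
  · exact absurd (same_side o₂ o₁ ho₂ ho₁ (union_comm o₁ o₂ ▸ hcov)
      (inter_comm o₁ o₂ ▸ hdisj) hu₂ hv₂) hn₂

theorem IsPreconnected.sInter_of_isChain [T2Space X] {c : Set (Set X)} (hne : c.Nonempty)
    (hc : IsChain (· ⊆ ·) c) (hcompact : ∀ A ∈ c, IsCompact A)
    (hpre : ∀ A ∈ c, IsPreconnected A) : IsPreconnected (⋂₀ c) := by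
  obtain ⟨A₀, hA₀⟩ := hne
  have hI : IsCompact (⋂₀ c) := (hcompact A₀ hA₀).of_isClosed_subset
    (isClosed_sInter fun A hA => (hcompact A hA).isClosed) (sInter_subset_of_mem hA₀)
  refine isPreconnected_iff_subset_of_disjoint_closed.2 fun F₁ F₂ hF₁ hF₂ hcov hdisj => ?_
  obtain ⟨W₁, W₂, hW₁, hW₂, hFW₁, hFW₂, hW⟩ := SeparatedNhds.of_isCompact_isCompact
    (hI.inter_right hF₁) (hI.inter_right hF₂)
    (disjoint_iff_inter_eq_empty.2 (by rw [inter_inter_inter_comm, inter_self, hdisj]))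
  have hIW : ⋂₀ c ⊆ W₁ ∪ W₂ := fun x hx => (hcov hx).imp (fun h => hFW₁ ⟨hx, h⟩)
    (fun h => hFW₂ ⟨hx, h⟩)
  have : Nonempty c := ⟨⟨A₀, hA₀⟩⟩
  obtain ⟨⟨A, hA⟩, hAW⟩ := exists_subset_nhds_of_isCompact (V := fun A : c => (A : Set X))
    (fun A B => (hc.total A.2 B.2).elim (fun h => ⟨A, le_rfl, h⟩) (fun h => ⟨B, h, le_rfl⟩))
    (fun A => hcompact A A.2) (U := W₁ ∪ W₂)
    (fun x hx => (hW₁.union hW₂).mem_nhds (hIW (by rwa [sInter_eq_iInter])))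
  have hIA : ⋂₀ c ⊆ A := sInter_subset_of_mem hA
  rcases (isPreconnected_iff_subset_of_disjoint.1 (hpre A hA)) W₁ W₂ hW₁ hW₂ hAW
    (by rw [hW.inter_eq, inter_empty]) with h | h
  · exact Or.inl fun x hx => (hcov hx).resolve_right fun hx₂ =>
      disjoint_left.1 hW (h (hIA hx)) (hFW₂ ⟨hx, hx₂⟩)
  · exact Or.inr fun x hx => (hcov hx).resolve_left fun hx₁ =>
      disjoint_left.1 hW (hFW₁ ⟨hx, hx₁⟩) (h (hIA hx))

theorem exists_isOpen_closure_inter_subset [T2Space X] {K U : Set X} {z : X} (hK : IsCompact K)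
    (hU : IsOpen U) (hz : z ∈ U) : ∃ G : Set X, IsOpen G ∧ z ∈ G ∧ closure G ∩ K ⊆ U := by
  obtain ⟨G, G', hG, hG', hzG, hKG', hGG'⟩ := SeparatedNhds.of_isCompact_isCompact
    isCompact_singleton (hK.diff hU) (disjoint_singleton_left.2 fun h => h.2 hz)
  refine ⟨G, hG, hzG rfl, fun s ⟨hsG, hsK⟩ => ?_⟩
  by_contra hsU
  exact disjoint_left.1 (hGG'.closure_left hG') hsG (hKG' ⟨hsK, hsU⟩)

end

namespace LocalConvexityStructure

variable {Y : Type v} [TopologicalSpace Y] (𝒱 : LocalConvexityStructure Y)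

def IsConvexIn (V A : Set Y) : Prop :=
  ∀ a ∈ A, ∀ b ∈ A, 𝒱.seg V a b ⊆ A

def IsLocallyConvex (A : Set Y) : Prop :=
  ∀ z ∈ A, ∃ V ∈ 𝒱.atlas, z ∈ V ∧ 𝒱.IsConvexIn V (A ∩ V)

/-- For the inclusion `e` of `D`, a weakening of the condition in `Generates` that `e (U ∩ A)`
be convex for `U ∈ 𝒱_e`: for `U = D ∩ O` mapped into the chart `V`, only convexity of `A ∩ O`
in `V` is asked. Unlike the original condition it holds for `A = D`, so `D` itself can start
the Zorn argument. -/
def IsRelConvex (D A : Set Y) : Prop :=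
  ∀ O V : Set Y, IsOpen O → V ∈ 𝒱.atlas → D ∩ O ⊆ V → 𝒱.IsConvexIn V (D ∩ O) →
    𝒱.IsConvexIn V (A ∩ O)

theorem subset_hull (A : Set Y) : A ⊆ 𝒱.hull A := fun _ ha _ hB => hB.1 ha

theorem hull_mono {A B : Set Y} (h : A ⊆ B) : 𝒱.hull A ⊆ 𝒱.hull B :=
  fun _ hy S hS => hy S ⟨h.trans hS.1, hS.2⟩

theorem isConvexSet_hull (A : Set Y) : 𝒱.IsConvexSet (𝒱.hull A) := fun U hU u hu v hv _ hy =>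
  ⟨fun B hB => (hB.2 U hU u ⟨hu.1 B hB, hu.2⟩ v ⟨hv.1 B hB, hv.2⟩ hy).1,
    (𝒱.convexity U hU).segment_subset u hu.2 v hv.2 hy⟩

variable {𝒱}

theorem IsConvexIn.isPreconnected {U B : Set Y} (hU : U ∈ 𝒱.atlas) (hBU : B ⊆ U)
    (hB : 𝒱.IsConvexIn U B) : IsPreconnected B := by
  rcases B.eq_empty_or_nonempty with rfl | ⟨z, hz⟩
  · exact isPreconnected_empty
  have CS := 𝒱.convexity U hU
  exact isPreconnected_of_forall z fun b hb => ⟨𝒱.seg U z b, hB z hz b hb,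
    CS.mem_left z (hBU hz) b (hBU hb), CS.mem_right z (hBU hz) b (hBU hb),
    CS.preconnected z (hBU hz) b (hBU hb)⟩

theorem IsLocallyConvex.exists_isPreconnected_subset_hull {C : Set Y}
    (hC : 𝒱.IsLocallyConvex C) (hconn : IsPreconnected C) {p q : Y} (hp : p ∈ C) (hq : q ∈ C) :
    ∃ F : Set Y, F.Finite ∧ ∃ T ⊆ C ∩ 𝒱.hull F, IsPreconnected T ∧ p ∈ T ∧ q ∈ T := by
  refine hconn.induction₂' (fun p q => ∃ F : Set Y, F.Finite ∧
    ∃ T ⊆ C ∩ 𝒱.hull F, IsPreconnected T ∧ p ∈ T ∧ q ∈ T) (fun x hx => ?_) ?_ hp hq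
  · obtain ⟨U, hU, hxU, hCU⟩ := hC x hx
    have CS := 𝒱.convexity U hU
    filter_upwards [inter_mem_nhdsWithin C (CS.isOpen.mem_nhds hxU)] with y hy
    have hxyF : ∀ z ∈ ({x, y} : Set Y), z ∈ 𝒱.hull {x, y} ∩ U := by
      rintro z (rfl | rfl)
      exacts [⟨𝒱.subset_hull _ (mem_insert z _), hxU⟩,
        ⟨𝒱.subset_hull _ (mem_insert_of_mem x rfl), hy.2⟩]
    have hseg : 𝒱.seg U x y ⊆ C ∩ 𝒱.hull {x, y} := fun s hs =>
      ⟨(hCU x ⟨hx, hxU⟩ y hy hs).1,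
        (𝒱.isConvexSet_hull _ U hU x (hxyF x (mem_insert x _)) y
          (hxyF y (mem_insert_of_mem x rfl)) hs).1⟩
    have hx' := CS.mem_left x hxU y hy.2
    have hy' := CS.mem_right x hxU y hy.2
    have hpre := CS.preconnected x hxU y hy.2
    have hfin : ({x, y} : Set Y).Finite := (finite_singleton y).insert x
    exact ⟨⟨_, hfin, _, hseg, hpre, hx', hy'⟩, ⟨_, hfin, _, hseg, hpre, hy', hx'⟩⟩
  · rintro x y z - - - ⟨F₁, hF₁, T₁, hT₁, hpre₁, hx₁, hy₁⟩ ⟨F₂, hF₂, T₂, hT₂, hpre₂, hy₂, hz₂⟩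
    refine ⟨F₁ ∪ F₂, hF₁.union hF₂, T₁ ∪ T₂, union_subset ?_ ?_, hpre₁.union y hy₁ hy₂ hpre₂,
      Or.inl hx₁, Or.inr hz₂⟩
    · exact hT₁.trans (inter_subset_inter_right C (𝒱.hull_mono subset_union_left))
    · exact hT₂.trans (inter_subset_inter_right C (𝒱.hull_mono subset_union_right))

theorem closure_inter_closure_inter_subset [T2Space Y] {U S o₁ o₂ : Set Y} {w : Y}
    (hU : U ∈ 𝒱.atlas) (hSU : S ⊆ U) (hS : 𝒱.IsConvexIn U S) (ho₁ : IsOpen o₁) (ho₂ : IsOpen o₂)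
    (hcov : S \ {w} ⊆ o₁ ∪ o₂) (hdisj : S \ {w} ∩ (o₁ ∩ o₂) = ∅) :
    closure (S ∩ o₁) ∩ closure (S ∩ o₂) ∩ U ⊆ {w} := by
  rintro ξ ⟨⟨h₁, h₂⟩, hξU⟩
  by_contra hξw
  have CS := 𝒱.convexity U hU
  obtain ⟨N₀, Nw, hN₀, -, hξN₀, hwNw, hN₀w⟩ := t2_separation hξw
  obtain ⟨N, hN, hξN, hNN₀, hNconv⟩ := CS.basis ξ hξU N₀ hN₀ hξN₀
  obtain ⟨a, haN, haS, ha₁⟩ := mem_closure_iff.1 h₁ N hN hξN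
  obtain ⟨b, hbN, hbS, hb₂⟩ := mem_closure_iff.1 h₂ N hN hξN
  -- a short chord near `ξ` lies in `S`, avoids `w`, and still joins `o₁` to `o₂`
  have hchord : 𝒱.seg U a b ⊆ S \ {w} := fun s hs => ⟨hS a haS b hbS hs, fun hsw =>
    disjoint_left.1 hN₀w (hNN₀ (hNconv a haN b hbN hs)).1 (mem_singleton_iff.1 hsw ▸ hwNw)⟩
  obtain ⟨s, hs, hs₁, hs₂⟩ := CS.preconnected a (hSU haS) b (hSU hbS) o₁ o₂ ho₁ ho₂
    (hchord.trans hcov) ⟨a, CS.mem_left a (hSU haS) b (hSU hbS), ha₁⟩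
    ⟨b, CS.mem_right a (hSU haS) b (hSU hbS), hb₂⟩
  exact hdisj.subset ⟨hchord hs, hs₁, hs₂⟩

theorem IsConvexIn.closure_of_isCompact [T2Space Y] {U B : Set Y} (hU : U ∈ 𝒱.atlas)
    (hB : 𝒱.IsConvexIn U B) (hBc : IsCompact (closure B)) (hBU : closure B ⊆ U) :
    𝒱.IsConvexIn U (closure B) := by
  have CS := 𝒱.convexity U hU
  intro u hu v hv w hw
  by_contra hwB
  have huU := hBU hu
  have hvU := hBU hv
  have hSU := CS.segment_subset u huU v hvU
  obtain ⟨o₁, o₂, ho₁, ho₂, hcov, hdisj, hu₁, hv₂⟩ :=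
    (CS.preconnected u huU v hvU).exists_separation_of_minimal (CS.mem_left u huU v hvU)
      (CS.mem_right u huU v hvU) hw (fun h => hwB (h ▸ hu)) (fun h => hwB (h ▸ hv))
      (CS.minimal u huU v hvU)
  have hsides : Disjoint (closure (𝒱.seg U u v ∩ o₁) ∩ closure B)
      (closure (𝒱.seg U u v ∩ o₂) ∩ closure B) := disjoint_left.2 fun x hx₁ hx₂ =>
    hwB (mem_singleton_iff.1 (closure_inter_closure_inter_subset hU hSU (CS.convex u huU v hvU)
      ho₁ ho₂ hcov hdisj ⟨⟨hx₁.1, hx₂.1⟩, hBU hx₁.2⟩) ▸ hx₁.2)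
  obtain ⟨O₁, O₂, hO₁, hO₂, hPO₁, hPO₂, hO⟩ := SeparatedNhds.of_isCompact_isCompact
    (hBc.inter_left isClosed_closure) (hBc.inter_left isClosed_closure) hsides
  have hSO : 𝒱.seg U u v ⊆ O₁ ∪ O₂ ∪ (closure B)ᶜ := by
    intro s hs
    by_cases hsB : s ∈ closure B
    · have hsw : s ≠ w := fun h => hwB (h ▸ hsB)
      exact Or.inl ((hcov ⟨hs, hsw⟩).imp (fun h => hPO₁ ⟨subset_closure ⟨hs, h⟩, hsB⟩)
        (fun h => hPO₂ ⟨subset_closure ⟨hs, h⟩, hsB⟩))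
    · exact Or.inr hsB
  obtain ⟨Nu, Nv, hNu, hNv, huNu, hvNv, hcont⟩ :=
    CS.continuity u huU v hvU _ ((hO₁.union hO₂).union isClosed_closure.isOpen_compl) hSO
  obtain ⟨u', ⟨hu'N, hu'O⟩, hu'B⟩ := mem_closure_iff.1 hu _ (hNu.inter hO₁)
    ⟨huNu, hPO₁ ⟨subset_closure ⟨CS.mem_left u huU v hvU, hu₁⟩, hu⟩⟩
  obtain ⟨v', ⟨hv'N, hv'O⟩, hv'B⟩ := mem_closure_iff.1 hv _ (hNv.inter hO₂)
    ⟨hvNv, hPO₂ ⟨subset_closure ⟨CS.mem_right u huU v hvU, hv₂⟩, hv⟩⟩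
  have hu'U := hBU (subset_closure hu'B)
  have hv'U := hBU (subset_closure hv'B)
  -- the segment from `u'` to `v'` lies in `B`, so it is covered by the disjoint `O₁`, `O₂`
  have hseg : 𝒱.seg U u' v' ⊆ O₁ ∪ O₂ := fun s hs =>
    (hcont u' ⟨hu'N, hu'U⟩ v' ⟨hv'N, hv'U⟩ hs).resolve_right
      (not_not.2 (subset_closure (hB u' hu'B v' hv'B hs)))
  obtain ⟨s, -, hs₁, hs₂⟩ := CS.preconnected u' hu'U v' hv'U O₁ O₂ hO₁ hO₂ hseg
    ⟨u', CS.mem_left u' hu'U v' hv'U, hu'O⟩ ⟨v', CS.mem_right u' hu'U v' hv'U, hv'O⟩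
  exact disjoint_left.1 hO hs₁ hs₂

theorem IsLocallyConvex.closure_connectedComponentIn [T2Space Y] {C H : Set Y}
    (hC : 𝒱.IsLocallyConvex C) (hCc : IsClosed C) (hH : 𝒱.IsConvexSet H)
    (hHc : IsCompact (closure H)) (p : Y) :
    𝒱.IsLocallyConvex (closure (connectedComponentIn (C ∩ H) p)) := by
  set P := connectedComponentIn (C ∩ H) p
  have hPM : P ⊆ C ∩ H := connectedComponentIn_subset _ _
  have hPH : closure P ⊆ closure H := closure_mono (hPM.trans inter_subset_right)
  intro z hz
  obtain ⟨U, hU, hzU, hCU⟩ := hC z (hCc.closure_subset_iff.2 (hPM.trans inter_subset_left) hz)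
  have CS := 𝒱.convexity U hU
  obtain ⟨G, hG, hzG, hGU⟩ := exists_isOpen_closure_inter_subset
    (hHc.of_isClosed_subset isClosed_closure hPH) CS.isOpen hzU
  obtain ⟨V, hV, hzV, hVGU, hVconv⟩ := CS.basis z hzU G hG hzG
  have hVU : V ⊆ U := hVGU.trans inter_subset_right
  obtain ⟨hVatlas, hsegV⟩ := 𝒱.subchart U hU V hVU hV hVconv
  have hMV : 𝒱.IsConvexIn U (C ∩ H ∩ V) := fun a ha b hb s hs =>
    ⟨⟨(hCU a ⟨ha.1.1, hVU ha.2⟩ b ⟨hb.1.1, hVU hb.2⟩ hs).1,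
      (hH U hU a ⟨ha.1.2, hVU ha.2⟩ b ⟨hb.1.2, hVU hb.2⟩ hs).1⟩, hVconv a ha.2 b hb.2 hs⟩
  -- a convex piece of `C ∩ H` is connected, so it stays in the component `P` once it meets it
  have hPV : 𝒱.IsConvexIn U (P ∩ V) := by
    intro a ha b hb
    have hMVP : C ∩ H ∩ V ⊆ P :=
      ((hMV.isPreconnected hU (inter_subset_right.trans hVU)).subset_connectedComponentIn
        ⟨hPM ha.1, ha.2⟩ inter_subset_left).trans (connectedComponentIn_eq ha.1).symm.subset
    exact fun s hs => ⟨hMVP (hMV a ⟨hPM ha.1, ha.2⟩ b ⟨hPM hb.1, hb.2⟩ hs),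
      hVconv a ha.2 b hb.2 hs⟩
  have hcl := hPV.closure_of_isCompact hU
    (hHc.of_isClosed_subset isClosed_closure ((closure_mono inter_subset_left).trans hPH))
    (fun s hs => hGU ⟨closure_mono (inter_subset_right.trans (hVGU.trans inter_subset_left)) hs,
      closure_mono inter_subset_left hs⟩)
  refine ⟨V, hVatlas, hzV, fun a ha b hb s hs => ?_⟩
  rw [hsegV a ha.2 b hb.2] at hs
  have hDV : closure P ∩ V ⊆ closure (P ∩ V) := fun x hx =>
    inter_comm P V ▸ hV.inter_closure ⟨hx.2, hx.1⟩
  exact ⟨closure_mono inter_subset_left (hcl a (hDV ha) b (hDV hb) hs), hVconv a ha.2 b hb.2 hs⟩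

theorem IsRelConvex.refl (D : Set Y) : 𝒱.IsRelConvex D D := fun _ _ _ _ _ h => h

theorem IsRelConvex.trans {D A B : Set Y} (hA : 𝒱.IsRelConvex D A) (hB : 𝒱.IsRelConvex A B)
    (hAD : A ⊆ D) : 𝒱.IsRelConvex D B := fun O V hO hV hDO hconv =>
  hB O V hO hV ((inter_subset_inter_left O hAD).trans hDO) (hA O V hO hV hDO hconv)

theorem IsRelConvex.sInter {D : Set Y} {c : Set (Set Y)} (hne : c.Nonempty)
    (hc : ∀ A ∈ c, 𝒱.IsRelConvex D A) : 𝒱.IsRelConvex D (⋂₀ c) := by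
  obtain ⟨A₀, hA₀⟩ := hne
  intro O V hO hV hDO hconv a ha b hb s hs
  exact ⟨mem_sInter.2 fun A hA => (hc A hA O V hO hV hDO hconv a ⟨ha.1 A hA, ha.2⟩ b
    ⟨hb.1 A hA, hb.2⟩ hs).1, (hc A₀ hA₀ O V hO hV hDO hconv a ⟨ha.1 A₀ hA₀, ha.2⟩ b
    ⟨hb.1 A₀ hA₀, hb.2⟩ hs).2⟩

theorem IsRelConvex.isLocallyConvex {D A : Set Y} (hA : 𝒱.IsRelConvex D A)
    (hD : 𝒱.IsLocallyConvex D) (hAD : A ⊆ D) : 𝒱.IsLocallyConvex A := fun z hz =>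
  let ⟨V, hV, hzV, hconv⟩ := hD z (hAD hz)
  ⟨V, hV, hzV, hA V V (𝒱.convexity V hV).isOpen hV inter_subset_right hconv⟩

theorem exists_minimal_isRelConvex [T2Space Y] {D : Set Y} (hDc : IsCompact D)
    (hD : IsPreconnected D) {p q : Y} (hp : p ∈ D) (hq : q ∈ D) :
    ∃ A ⊆ D, IsCompact A ∧ IsPreconnected A ∧ p ∈ A ∧ q ∈ A ∧ 𝒱.IsRelConvex D A ∧
      ∀ B ⊆ A, IsCompact B → IsPreconnected B → p ∈ B → q ∈ B → 𝒱.IsRelConvex A B → B = A := by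
  set 𝒯 : Set (Set Y) := {A | A ⊆ D ∧ IsCompact A ∧ IsPreconnected A ∧ p ∈ A ∧ q ∈ A ∧
    𝒱.IsRelConvex D A}
  have hchain : ∀ c ⊆ 𝒯, IsChain (· ⊆ ·) c → c.Nonempty → ∃ lb ∈ 𝒯, ∀ A ∈ c, lb ⊆ A := by
    intro c hc𝒯 hc ⟨A₀, hA₀⟩
    have hcompact : ∀ A ∈ c, IsCompact A := fun A hA => (hc𝒯 hA).2.1
    refine ⟨⋂₀ c, ⟨(sInter_subset_of_mem hA₀).trans (hc𝒯 hA₀).1, ?_,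
      IsPreconnected.sInter_of_isChain ⟨A₀, hA₀⟩ hc hcompact fun A hA => (hc𝒯 hA).2.2.1,
      fun A hA => (hc𝒯 hA).2.2.2.1, fun A hA => (hc𝒯 hA).2.2.2.2.1,
      IsRelConvex.sInter ⟨A₀, hA₀⟩ fun A hA => (hc𝒯 hA).2.2.2.2.2⟩,
      fun A hA => sInter_subset_of_mem hA⟩
    exact (hcompact A₀ hA₀).of_isClosed_subset
      (isClosed_sInter fun A hA => (hcompact A hA).isClosed) (sInter_subset_of_mem hA₀)
  obtain ⟨A, -, hAmin⟩ := zorn_superset_nonempty 𝒯 hchain D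
    ⟨subset_rfl, hDc, hD, hp, hq, IsRelConvex.refl D⟩
  obtain ⟨hAD, hAc, hApre, hpA, hqA, hArel⟩ := hAmin.1
  exact ⟨A, hAD, hAc, hApre, hpA, hqA, hArel, fun B hBA hBc hBpre hpB hqB hBrel =>
    hAmin.eq_of_le ⟨hBA.trans hAD, hBc, hBpre, hpB, hqB, hArel.trans hBrel hAD⟩ hBA⟩

theorem isEtaleChartTo_subtypeVal {D O V : Set Y} (hO : IsOpen O) (hV : V ∈ 𝒱.atlas)
    (hDO : D ∩ O ⊆ V) (hconv : 𝒱.IsConvexIn V (D ∩ O)) :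
    IsEtaleChartTo 𝒱 (Subtype.val : D → Y) (Subtype.val ⁻¹' O) V := by
  refine ⟨hO.preimage continuous_subtype_val, Subtype.val_injective.injOn, ?_, hV, ?_, ?_⟩
  · rintro W hWO ⟨O', hO', rfl⟩
    refine ⟨O', hO', ?_⟩
    rw [Subtype.image_preimage_coe, Subtype.image_preimage_coe]
    exact Subset.antisymm (fun y hy => ⟨hy.2, hy.1, hWO (show (⟨y, hy.1⟩ : D) ∈ _ from hy.2)⟩)
      fun y hy => ⟨hy.2.1, hy.1⟩
  · rwa [Subtype.image_preimage_coe]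
  · rwa [Subtype.image_preimage_coe]

theorem isEtale_subtypeVal [T2Space Y] {D : Set Y} (hDc : IsCompact D) (hD : IsConnected D)
    (hDl : 𝒱.IsLocallyConvex D) : IsEtale 𝒱 (Subtype.val : D → Y) where
  continuous := continuous_subtype_val
  connectedSpace := Subtype.connectedSpace hD
  isClosedMap := hDc.isClosed.isClosedEmbedding_subtypeVal.isClosedMap
  charts_cover z :=
    let ⟨V, hV, hzV, hconv⟩ := hDl z.1 z.2
    ⟨_, ⟨V, isEtaleChartTo_subtypeVal (𝒱.convexity V hV).isOpen hV inter_subset_right hconv⟩,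
      hzV⟩

theorem generates_subtypeVal {D : Set Y} (hDc : IsCompact D) {p q : Y} (hp : p ∈ D) (hq : q ∈ D)
    (hmin : ∀ A ⊆ D, IsCompact A → IsPreconnected A → p ∈ A → q ∈ A → 𝒱.IsRelConvex D A →
      A = D) :
    Generates 𝒱 (Subtype.val : D → Y) {⟨p, hp⟩, ⟨q, hq⟩} := by
  have : CompactSpace D := isCompact_iff_compactSpace.mp hDc
  rintro ⟨A, hAne, hAcl, hApre, hpqA, hAconv⟩
  have hAD : Subtype.val '' A ⊆ D := by rintro _ ⟨x, -, rfl⟩; exact x.2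
  refine hAne (Subtype.val_injective.image_injective ?_)
  rw [image_univ, Subtype.range_coe]
  refine hmin _ hAD (hAcl.isCompact.image continuous_subtype_val)
    (hApre.image _ continuous_subtype_val.continuousOn) ⟨_, hpqA (Or.inl rfl), rfl⟩
    ⟨_, hpqA (Or.inr rfl), rfl⟩ fun O V hO hV hDO hconv => ?_
  have hAO := hAconv _ ⟨V, isEtaleChartTo_subtypeVal hO hV hDO hconv⟩ V hV
  rwa [image_preimage_inter, inter_comm O, inter_eq_left.2] at hAO
  exact (inter_subset_inter_left O hAD).trans hDO

theorem IsLocallyConvex.nonempty_geodesicConnecting [T2Space Y] {D : Set Y}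
    (hD : 𝒱.IsLocallyConvex D) (hDc : IsCompact D) (hDpre : IsPreconnected D) {p q : Y}
    (hp : p ∈ D) (hq : q ∈ D) : Nonempty (GeodesicConnecting 𝒱 p q) := by
  obtain ⟨A, hAD, hAc, hApre, hpA, hqA, hArel, hAmin⟩ :=
    exists_minimal_isRelConvex hDc hDpre hp hq
  exact ⟨{ Z := A, e := Subtype.val, x := ⟨p, hpA⟩, y := ⟨q, hqA⟩
           compact := isCompact_iff_compactSpace.mp hAc
           etale := isEtale_subtypeVal hAc ⟨⟨p, hpA⟩, hApre⟩ (hArel.isLocallyConvex hD hAD)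
           generates := generates_subtypeVal hAc hpA hqA hAmin
           endpoint_left := rfl, endpoint_right := rfl }⟩

end LocalConvexityStructure

/-- Corollary of Theorem 3; Tietze–Nakajima–Klee type theorem: Let `Y`
be a geodesic manifold and let `C ⊆ Y` be a closed, connected, locally convex subset
(every point of `C` has a chart `U ∈ 𝒱` around it such that `C ∩ U` is convex in `U`).
Then `C` is weakly convex: any two points of `C` are the end points of some geodesic
in `Y`. -/
theorem stmt_19 {Y : Type v} [TopologicalSpace Y] (𝒱 : LocalConvexityStructure Y)
    (hY : IsGeodesicManifold 𝒱) (C : Set Y)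
    (hclosed : IsClosed C) (hconn : IsConnected C)
    (hlc : ∀ z ∈ C, ∃ U ∈ 𝒱.atlas, z ∈ U ∧
      ∀ u ∈ C ∩ U, ∀ v ∈ C ∩ U, 𝒱.seg U u v ⊆ C ∩ U) :
    𝒱.WeaklyConvex C := by
  have := hY.t2
  have hC : 𝒱.IsLocallyConvex C := hlc
  intro p hp q hq
  obtain ⟨F, hF, T, hTM, hT, hpT, hqT⟩ :=
    hC.exists_isPreconnected_subset_hull hconn.isPreconnected hp hq
  have hTP := hT.subset_connectedComponentIn hpT hTM
  exact (hC.closure_connectedComponentIn hclosed (𝒱.isConvexSet_hull F)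
    (hY.hull_compact F hF) p).nonempty_geodesicConnecting
    ((hY.hull_compact F hF).of_isClosed_subset isClosed_closure
      (closure_mono ((connectedComponentIn_subset _ _).trans inter_subset_right)))
    isPreconnected_connectedComponentIn.closure (subset_closure (hTP hpT))
    (subset_closure (hTP hqT))
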